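/- Let (X, 𝒪_n) be an operator space. Then 𝒲_max satisfies the condition (OW): for every n ≥ 1 and every x ∈ M_n(X), 𝒲_max([[0, x],[0, 0]]) = (1/2) 𝒪_n(x), where [[0,x],[0,0]] ∈ M_{2n}(X) is the block matrix with x in the upper-right n×n corner and zeros elsewhere. Consequently 𝒲_max is a numerical radius norm affiliated with (X, 𝒪_n). -/

import Mathlib

open scoped ComplexOrder Matrix ENNReal TensorProduct

universe u v

noncomputable section

/-- The block-diagonal sum `x ⊕ y` of two square matrices. -/
def blockDiag {X : Type*} [Zero X] {m n : ℕ} (x : Matrix (Fin m) (Fin m) X)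
    (y : Matrix (Fin n) (Fin n) X) : Matrix (Fin (m + n)) (Fin (m + n)) X :=
  Matrix.submatrix (Matrix.fromBlocks x 0 0 y) finSumFinEquiv.symm finSumFinEquiv.symm

/-- The block matrix `[[0, x], [0, 0]]` with `x` in the upper-right corner. -/
def cornerBlock {X : Type*} [Zero X] {n : ℕ} (x : Matrix (Fin n) (Fin n) X) :
    Matrix (Fin (n + n)) (Fin (n + n)) X :=
  Matrix.submatrix (Matrix.fromBlocks 0 x 0 0) finSumFinEquiv.symm finSumFinEquiv.symm

/-- Multiplication `α x` of a scalar matrix with a matrix over a ℂ-module. -/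
def scalarMulLeft {X : Type*} [AddCommMonoid X] [Module ℂ X] {m n k : ℕ}
    (α : Matrix (Fin m) (Fin n) ℂ) (x : Matrix (Fin n) (Fin k) X) :
    Matrix (Fin m) (Fin k) X :=
  Matrix.of fun i j => ∑ l, α i l • x l j

/-- Multiplication `x β` of a matrix over a ℂ-module with a scalar matrix. -/
def scalarMulRight {X : Type*} [AddCommMonoid X] [Module ℂ X] {m n k : ℕ}
    (x : Matrix (Fin m) (Fin n) X) (β : Matrix (Fin n) (Fin k) ℂ) :
    Matrix (Fin m) (Fin k) X :=
  Matrix.of fun i j => ∑ l, β l j • x i l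

/-- Operator norm of a rectangular complex matrix, as an operator ℓ²(Fin n) → ℓ²(Fin m). -/
def matOpNorm {m n : ℕ} (α : Matrix (Fin m) (Fin n) ℂ) : ℝ :=
  ‖LinearMap.toContinuousLinearMap (Matrix.toEuclideanLin α)‖

/-- The numerical radius of a bounded operator on a complex inner product space. -/
def numRadius {H : Type*} [NormedAddCommGroup H] [InnerProductSpace ℂ H]
    (a : H →L[ℂ] H) : ℝ :=
  ⨆ ξ : {ξ : H // ‖ξ‖ ≤ 1}, ‖(inner ℂ (ξ : H) (a ξ) : ℂ)‖

/-- The bounded operator `Hⁿ → Hᵐ` induced by an `m × n` matrix of bounded operators,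
where `Hⁿ` carries the ℓ²-direct sum structure. -/
def matOpRect {H : Type*} [NormedAddCommGroup H] [InnerProductSpace ℂ H] {m n : ℕ}
    (a : Matrix (Fin m) (Fin n) (H →L[ℂ] H)) :
    (PiLp 2 fun _ : Fin n => H) →L[ℂ] (PiLp 2 fun _ : Fin m => H) :=
  ((PiLp.continuousLinearEquiv 2 ℂ (fun _ : Fin m => H)).symm.toContinuousLinearMap) ∘L
    (ContinuousLinearMap.pi fun i => ∑ j, (a i j).comp (ContinuousLinearMap.proj j)) ∘L
    ((PiLp.continuousLinearEquiv 2 ℂ (fun _ : Fin n => H)).toContinuousLinearMap)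

/-- The bounded operator on `Hⁿ` induced by an `n × n` matrix of bounded operators. -/
def matOp {H : Type*} [NormedAddCommGroup H] [InnerProductSpace ℂ H] {n : ℕ}
    (a : Matrix (Fin n) (Fin n) (H →L[ℂ] H)) :
    (PiLp 2 fun _ : Fin n => H) →L[ℂ] (PiLp 2 fun _ : Fin n => H) :=
  matOpRect a

/-- The numerical radius of a complex `n × n` matrix, acting on `ℂⁿ`. -/
def matNumRadius {n : ℕ} (a : Matrix (Fin n) (Fin n) ℂ) : ℝ :=
  numRadius (LinearMap.toContinuousLinearMap (Matrix.toEuclideanLin a))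

/-- The identification of `M_k(M_n(ℂ))` with `M_{kn}(ℂ)`. -/
def flatten {k n : ℕ} (x : Matrix (Fin k) (Fin k) (Matrix (Fin n) (Fin n) ℂ)) :
    Matrix (Fin (k * n)) (Fin (k * n)) ℂ :=
  Matrix.of fun i j =>
    x (finProdFinEquiv.symm i).1 (finProdFinEquiv.symm j).1
      (finProdFinEquiv.symm i).2 (finProdFinEquiv.symm j).2

/-- An (abstract) numerical radius operator space: a complex vector space `X` together with a
norm `W n` on each matrix space `M_n(X)` satisfying the conditions (WI) and (WII). -/
structure NRNorm (X : Type u) [AddCommGroup X] [Module ℂ X] where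
  W : ∀ n : ℕ, Matrix (Fin n) (Fin n) X → ℝ
  nonneg : ∀ (n : ℕ) (x : Matrix (Fin n) (Fin n) X), 0 ≤ W n x
  eq_zero_iff : ∀ (n : ℕ) (x : Matrix (Fin n) (Fin n) X), W n x = 0 ↔ x = 0
  add_le : ∀ (n : ℕ) (x y : Matrix (Fin n) (Fin n) X), W n (x + y) ≤ W n x + W n y
  smul_eq : ∀ (n : ℕ) (c : ℂ) (x : Matrix (Fin n) (Fin n) X), W n (c • x) = ‖c‖ * W n x
  cond_WI : ∀ (m n : ℕ) (x : Matrix (Fin m) (Fin m) X) (y : Matrix (Fin n) (Fin n) X),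
    W (m + n) (blockDiag x y) = max (W m x) (W n y)
  cond_WII : ∀ (m n : ℕ) (α : Matrix (Fin n) (Fin m) ℂ) (x : Matrix (Fin m) (Fin m) X),
    W n (scalarMulRight (scalarMulLeft α x) αᴴ) ≤ matOpNorm α ^ 2 * W m x

/-- An (abstract) operator space: a complex vector space `X` together with a norm `O n` on each
matrix space `M_n(X)` satisfying Ruan's axioms (OI) and (OII). -/
structure OSNorm (X : Type u) [AddCommGroup X] [Module ℂ X] where
  O : ∀ n : ℕ, Matrix (Fin n) (Fin n) X → ℝ
  nonneg : ∀ (n : ℕ) (x : Matrix (Fin n) (Fin n) X), 0 ≤ O n x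
  eq_zero_iff : ∀ (n : ℕ) (x : Matrix (Fin n) (Fin n) X), O n x = 0 ↔ x = 0
  add_le : ∀ (n : ℕ) (x y : Matrix (Fin n) (Fin n) X), O n (x + y) ≤ O n x + O n y
  smul_eq : ∀ (n : ℕ) (c : ℂ) (x : Matrix (Fin n) (Fin n) X), O n (c • x) = ‖c‖ * O n x
  cond_OI : ∀ (m n : ℕ) (x : Matrix (Fin m) (Fin m) X) (y : Matrix (Fin n) (Fin n) X),
    O (m + n) (blockDiag x y) = max (O m x) (O n y)
  cond_OII : ∀ (m n : ℕ) (α : Matrix (Fin n) (Fin m) ℂ) (x : Matrix (Fin m) (Fin m) X)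
    (β : Matrix (Fin m) (Fin n) ℂ),
    O n (scalarMulRight (scalarMulLeft α x) β) ≤ matOpNorm α * O m x * matOpNorm β

/-- The completely bounded norm (valued in `[0, ∞]`) of a linear map, with respect to given
matrix norm sequences on the domain and the codomain. -/
def cbNorm {X Y : Type*} (WX : ∀ n : ℕ, Matrix (Fin n) (Fin n) X → ℝ)
    (WY : ∀ n : ℕ, Matrix (Fin n) (Fin n) Y → ℝ) (φ : X → Y) : ℝ≥0∞ :=
  ⨆ (n : ℕ) (x : Matrix (Fin n) (Fin n) X) (_ : WX n x ≤ 1),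
    ENNReal.ofReal (WY n (x.map φ))

/-- The maximal numerical radius norm affiliated with an operator space `(X, 𝒪_n)`. -/
def Wmax {X : Type u} [AddCommGroup X] [Module ℂ X] (OS : OSNorm X)
    (n : ℕ) (x : Matrix (Fin n) (Fin n) X) : ℝ :=
  sInf {t | ∃ (r : ℕ) (a : Matrix (Fin n) (Fin r) ℂ) (y : Matrix (Fin r) (Fin r) X)
      (b : Matrix (Fin r) (Fin n) ℂ),
    x = scalarMulRight (scalarMulLeft a y) b ∧ OS.O r y = 1 ∧
      t = (1 / 2) * matOpNorm (a * aᴴ + bᴴ * b)}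

/-- A complex Hilbert space together with a linear map of `X` into its bounded operators. -/
structure HilbertRep (X : Type u) [AddCommGroup X] [Module ℂ X] where
  H : Type u
  [instN : NormedAddCommGroup H]
  [instI : InnerProductSpace ℂ H]
  [instC : CompleteSpace H]
  Φ : X →ₗ[ℂ] (H →L[ℂ] H)

attribute [instance] HilbertRep.instN HilbertRep.instI HilbertRep.instC

end

/-!
If `x = a y b` with `𝒪(y) = 1`, then (OII) gives `𝒪(x) ≤ ‖a‖ ‖b‖ ≤ ‖a a* + b* b‖`, so
`𝒪(x) / 2 ≤ 𝒲_max(x)`. With `P, Q` the isometric inclusions of the two summands, the corner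
matrix is `P x Q*`; it has the same `𝒪`-norm as `x`, and `P P* + Q Q* = 1` shows that the
decomposition `(P, x, Q*)` attains the bound `𝒪(x) / 2`.

The norm axioms and (WI), (WII) for `𝒲_max` come from transforming decompositions: direct sums of
two decompositions give the triangle inequality and (WI) (the block-diagonal embedding
`M_m × M_n → M_{m+n}` is a *-homomorphism of C*-algebras, hence contractive), `(√c a, y, √c b)`
gives homogeneity, and `(α a, y, b α*)` gives (WII).
-/

open scoped Matrix.Norms.L2Operator

lemma Fin.castAdd_ne_natAdd {m n : ℕ} (i : Fin m) (j : Fin n) :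
    Fin.castAdd n i ≠ Fin.natAdd m j := by
  simp only [ne_eq, Fin.ext_iff, Fin.val_castAdd, Fin.val_natAdd]
  omega

lemma Matrix.l2_opNorm_one_le {n : Type*} [Fintype n] [DecidableEq n] :
    ‖(1 : Matrix n n ℂ)‖ ≤ 1 := by
  rw [← Matrix.diagonal_one, Matrix.l2_opNorm_diagonal]
  exact (pi_norm_le_iff_of_nonneg zero_le_one).mpr fun _ => by simp

lemma Matrix.l2_opNorm_le_one_of_conjTranspose_mul_self_eq_one {m n : Type*} [Fintype m]
    [Fintype n] [DecidableEq n] {A : Matrix m n ℂ} (hA : Aᴴ * A = 1) : ‖A‖ ≤ 1 := by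
  have h := Matrix.l2_opNorm_conjTranspose_mul_self A
  rw [hA] at h
  nlinarith [Matrix.l2_opNorm_one_le (n := n), norm_nonneg A]

def blockInl (m n : ℕ) : Matrix (Fin (m + n)) (Fin m) ℂ :=
  Matrix.of fun i j => if i = Fin.castAdd n j then 1 else 0

def blockInr (m n : ℕ) : Matrix (Fin (m + n)) (Fin n) ℂ :=
  Matrix.of fun i j => if i = Fin.natAdd m j then 1 else 0

section BlockInclusions

variable (m n : ℕ)

@[simp] lemma blockInl_conjTranspose_mul_blockInl : (blockInl m n)ᴴ * blockInl m n = 1 := by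
  ext i j
  simp [blockInl, Matrix.mul_apply, Matrix.one_apply, eq_comm]

@[simp] lemma blockInr_conjTranspose_mul_blockInr : (blockInr m n)ᴴ * blockInr m n = 1 := by
  ext i j
  simp [blockInr, Matrix.mul_apply, Matrix.one_apply, eq_comm]

@[simp] lemma blockInl_conjTranspose_mul_blockInr : (blockInl m n)ᴴ * blockInr m n = 0 := by
  ext i j
  simp [blockInl, blockInr, Matrix.mul_apply, (Fin.castAdd_ne_natAdd _ _).symm]

@[simp] lemma blockInr_conjTranspose_mul_blockInl : (blockInr m n)ᴴ * blockInl m n = 0 := by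
  ext i j
  simp [blockInl, blockInr, Matrix.mul_apply, Fin.castAdd_ne_natAdd]

@[simp] lemma blockInl_conjTranspose_mul_blockInl_mul {k : Type*} (A : Matrix (Fin m) k ℂ) :
    (blockInl m n)ᴴ * (blockInl m n * A) = A := by
  rw [← Matrix.mul_assoc, blockInl_conjTranspose_mul_blockInl, Matrix.one_mul]

@[simp] lemma blockInr_conjTranspose_mul_blockInr_mul {k : Type*} (A : Matrix (Fin n) k ℂ) :
    (blockInr m n)ᴴ * (blockInr m n * A) = A := by
  rw [← Matrix.mul_assoc, blockInr_conjTranspose_mul_blockInr, Matrix.one_mul]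

@[simp] lemma blockInl_conjTranspose_mul_blockInr_mul {k : Type*} (A : Matrix (Fin n) k ℂ) :
    (blockInl m n)ᴴ * (blockInr m n * A) = 0 := by
  rw [← Matrix.mul_assoc, blockInl_conjTranspose_mul_blockInr, Matrix.zero_mul]

@[simp] lemma blockInr_conjTranspose_mul_blockInl_mul {k : Type*} (A : Matrix (Fin m) k ℂ) :
    (blockInr m n)ᴴ * (blockInl m n * A) = 0 := by
  rw [← Matrix.mul_assoc, blockInr_conjTranspose_mul_blockInl, Matrix.zero_mul]

lemma blockInl_mul_conjTranspose_add :
    blockInl m n * (blockInl m n)ᴴ + blockInr m n * (blockInr m n)ᴴ = 1 := by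
  ext i j
  refine Fin.addCases (fun i => ?_) (fun i => ?_) i <;>
    refine Fin.addCases (fun j => ?_) (fun j => ?_) j <;>
    simp [blockInl, blockInr, Matrix.mul_apply, Matrix.one_apply, Fin.castAdd_ne_natAdd,
      (Fin.castAdd_ne_natAdd _ _).symm]

lemma norm_blockInl_le : ‖blockInl m n‖ ≤ 1 :=
  Matrix.l2_opNorm_le_one_of_conjTranspose_mul_self_eq_one (blockInl_conjTranspose_mul_blockInl m n)

lemma norm_blockInr_le : ‖blockInr m n‖ ≤ 1 :=
  Matrix.l2_opNorm_le_one_of_conjTranspose_mul_self_eq_one (blockInr_conjTranspose_mul_blockInr m n)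

noncomputable def blockDiagStarHom : Matrix (Fin m) (Fin m) ℂ × Matrix (Fin n) (Fin n) ℂ →⋆ₙₐ[ℂ]
    Matrix (Fin (m + n)) (Fin (m + n)) ℂ where
  toFun C := blockInl m n * C.1 * (blockInl m n)ᴴ + blockInr m n * C.2 * (blockInr m n)ᴴ
  map_smul' c C := by simp [smul_add]
  map_zero' := by simp
  map_add' C D := by
    simp only [Prod.fst_add, Prod.snd_add, Matrix.mul_add, Matrix.add_mul]
    abel
  map_mul' C D := by simp [Matrix.mul_add, Matrix.add_mul, Matrix.mul_assoc]
  map_star' C := by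
    simp [Matrix.star_eq_conjTranspose, Matrix.conjTranspose_mul, Matrix.mul_assoc]

lemma norm_blockDiagStarHom_le (C : Matrix (Fin m) (Fin m) ℂ) (C' : Matrix (Fin n) (Fin n) ℂ) :
    ‖blockInl m n * C * (blockInl m n)ᴴ + blockInr m n * C' * (blockInr m n)ᴴ‖ ≤ max ‖C‖ ‖C'‖ :=
  NonUnitalStarAlgHom.norm_apply_le (blockDiagStarHom m n) (C, C')

end BlockInclusions

lemma norm_mul_norm_le_norm_mul_conjTranspose_add {n r : ℕ} (a : Matrix (Fin n) (Fin r) ℂ)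
    (b : Matrix (Fin r) (Fin n) ℂ) : ‖a‖ * ‖b‖ ≤ ‖a * aᴴ + bᴴ * b‖ := by
  -- `a * aᴴ + bᴴ * b = T * Tᴴ` for the row `T = [a, bᴴ]`, and `a`, `bᴴ` are compressions of `T`
  set T := a * (blockInl r r)ᴴ + bᴴ * (blockInr r r)ᴴ
  have hTT : a * aᴴ + bᴴ * b = T * Tᴴ := by
    simp [T, Matrix.add_mul, Matrix.mul_add, Matrix.mul_assoc, Matrix.conjTranspose_add,
      Matrix.conjTranspose_mul]
  have hT : ‖T * Tᴴ‖ = ‖T‖ * ‖T‖ := by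
    simpa [Matrix.l2_opNorm_conjTranspose] using Matrix.l2_opNorm_conjTranspose_mul_self Tᴴ
  have ha : ‖a‖ ≤ ‖T‖ := calc
    ‖a‖ = ‖T * blockInl r r‖ := by simp [T, Matrix.add_mul, Matrix.mul_assoc]
    _ ≤ ‖T‖ * ‖blockInl r r‖ := Matrix.l2_opNorm_mul _ _
    _ ≤ ‖T‖ := mul_le_of_le_one_right (norm_nonneg _) (norm_blockInl_le r r)
  have hb : ‖b‖ ≤ ‖T‖ := calc
    ‖b‖ = ‖T * blockInr r r‖ := by
      simp [T, Matrix.add_mul, Matrix.mul_assoc, Matrix.l2_opNorm_conjTranspose]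
    _ ≤ ‖T‖ * ‖blockInr r r‖ := Matrix.l2_opNorm_mul _ _
    _ ≤ ‖T‖ := mul_le_of_le_one_right (norm_nonneg _) (norm_blockInr_le r r)
  rw [hTT, hT]
  exact mul_le_mul ha hb (norm_nonneg _) (norm_nonneg _)

lemma Real.sInf_le_max_sInf {S S' T : Set ℝ} (hS : S.Nonempty) (hS' : S'.Nonempty)
    (hT : BddBelow T) (h : ∀ s ∈ S, ∀ s' ∈ S', ∃ t ∈ T, t ≤ max s s') :
    sInf T ≤ max (sInf S) (sInf S') := by
  by_contra! hlt
  obtain ⟨s, hs, hslt⟩ := exists_lt_of_csInf_lt hS ((le_max_left _ _).trans_lt hlt)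
  obtain ⟨s', hs', hs'lt⟩ := exists_lt_of_csInf_lt hS' ((le_max_right _ _).trans_lt hlt)
  obtain ⟨t, ht, hts⟩ := h s hs s' hs'
  exact (csInf_le hT ht |>.trans hts).not_gt (max_lt hslt hs'lt)

section ScalarMul

variable {X : Type*} [AddCommMonoid X] [Module ℂ X] {m n k p : ℕ}

@[simp] lemma scalarMulLeft_one (x : Matrix (Fin n) (Fin k) X) : scalarMulLeft 1 x = x := by
  ext i j
  simp [scalarMulLeft, Matrix.one_apply, ite_smul]

@[simp] lemma scalarMulRight_one (x : Matrix (Fin m) (Fin n) X) : scalarMulRight x 1 = x := by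
  ext i j
  simp [scalarMulRight, Matrix.one_apply, ite_smul]

@[simp] lemma scalarMulLeft_zero_left (x : Matrix (Fin n) (Fin k) X) :
    scalarMulLeft (0 : Matrix (Fin m) (Fin n) ℂ) x = 0 := by
  ext i j
  simp [scalarMulLeft]

@[simp] lemma scalarMulLeft_zero_right (α : Matrix (Fin m) (Fin n) ℂ) :
    scalarMulLeft α (0 : Matrix (Fin n) (Fin k) X) = 0 := by
  ext i j
  simp [scalarMulLeft]

@[simp] lemma scalarMulRight_zero_left (β : Matrix (Fin n) (Fin k) ℂ) :
    scalarMulRight (0 : Matrix (Fin m) (Fin n) X) β = 0 := by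
  ext i j
  simp [scalarMulRight]

lemma scalarMulLeft_add_right (α : Matrix (Fin m) (Fin n) ℂ) (x y : Matrix (Fin n) (Fin k) X) :
    scalarMulLeft α (x + y) = scalarMulLeft α x + scalarMulLeft α y := by
  ext i j
  simp [scalarMulLeft, Finset.sum_add_distrib]

lemma scalarMulRight_add_left (x y : Matrix (Fin m) (Fin n) X) (β : Matrix (Fin n) (Fin k) ℂ) :
    scalarMulRight (x + y) β = scalarMulRight x β + scalarMulRight y β := by
  ext i j
  simp [scalarMulRight, Finset.sum_add_distrib]

lemma scalarMulLeft_smul_left (c : ℂ) (α : Matrix (Fin m) (Fin n) ℂ)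
    (x : Matrix (Fin n) (Fin k) X) : scalarMulLeft (c • α) x = c • scalarMulLeft α x := by
  ext i j
  simp [scalarMulLeft, Finset.smul_sum, smul_smul]

lemma scalarMulLeft_smul_right (c : ℂ) (α : Matrix (Fin m) (Fin n) ℂ)
    (x : Matrix (Fin n) (Fin k) X) : scalarMulLeft α (c • x) = c • scalarMulLeft α x := by
  ext i j
  simp [scalarMulLeft, Finset.smul_sum, smul_smul, mul_comm]

lemma scalarMulRight_smul_left (c : ℂ) (x : Matrix (Fin m) (Fin n) X)
    (β : Matrix (Fin n) (Fin k) ℂ) : scalarMulRight (c • x) β = c • scalarMulRight x β := by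
  ext i j
  simp [scalarMulRight, Finset.smul_sum, smul_smul, mul_comm]

lemma scalarMulRight_smul_right (c : ℂ) (x : Matrix (Fin m) (Fin n) X)
    (β : Matrix (Fin n) (Fin k) ℂ) : scalarMulRight x (c • β) = c • scalarMulRight x β := by
  ext i j
  simp [scalarMulRight, Finset.smul_sum, smul_smul]

lemma scalarMulLeft_mul (α : Matrix (Fin m) (Fin n) ℂ) (β : Matrix (Fin n) (Fin k) ℂ)
    (x : Matrix (Fin k) (Fin p) X) :
    scalarMulLeft (α * β) x = scalarMulLeft α (scalarMulLeft β x) := by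
  ext i j
  simp only [scalarMulLeft, Matrix.of_apply, Matrix.mul_apply, Finset.sum_smul, Finset.smul_sum,
    smul_smul]
  exact Finset.sum_comm

lemma scalarMulRight_mul (x : Matrix (Fin m) (Fin n) X) (β : Matrix (Fin n) (Fin k) ℂ)
    (γ : Matrix (Fin k) (Fin p) ℂ) :
    scalarMulRight x (β * γ) = scalarMulRight (scalarMulRight x β) γ := by
  ext i j
  simp only [scalarMulRight, Matrix.of_apply, Matrix.mul_apply, Finset.sum_smul, Finset.smul_sum,
    smul_smul]
  rw [Finset.sum_comm]
  simp only [mul_comm]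

lemma scalarMulLeft_scalarMulRight (α : Matrix (Fin m) (Fin n) ℂ) (x : Matrix (Fin n) (Fin k) X)
    (β : Matrix (Fin k) (Fin p) ℂ) :
    scalarMulLeft α (scalarMulRight x β) = scalarMulRight (scalarMulLeft α x) β := by
  ext i j
  simp only [scalarMulLeft, scalarMulRight, Matrix.of_apply, Finset.smul_sum, smul_smul]
  rw [Finset.sum_comm]
  simp only [mul_comm]

lemma sandwich_sandwich {q r : ℕ} (α : Matrix (Fin m) (Fin n) ℂ) (a : Matrix (Fin n) (Fin r) ℂ)
    (y : Matrix (Fin r) (Fin r) X) (b : Matrix (Fin r) (Fin q) ℂ) (β : Matrix (Fin q) (Fin p) ℂ) :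
    scalarMulRight (scalarMulLeft α (scalarMulRight (scalarMulLeft a y) b)) β
      = scalarMulRight (scalarMulLeft (α * a) y) (b * β) := by
  rw [scalarMulLeft_scalarMulRight, scalarMulLeft_mul, scalarMulRight_mul]

lemma blockDiag_eq_sandwich (x : Matrix (Fin m) (Fin m) X) (y : Matrix (Fin n) (Fin n) X) :
    blockDiag x y = scalarMulRight (scalarMulLeft (blockInl m n) x) (blockInl m n)ᴴ
      + scalarMulRight (scalarMulLeft (blockInr m n) y) (blockInr m n)ᴴ := by
  ext i j
  refine Fin.addCases (fun i => ?_) (fun i => ?_) i <;>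
    refine Fin.addCases (fun j => ?_) (fun j => ?_) j <;>
    simp [blockDiag, scalarMulLeft, scalarMulRight, blockInl, blockInr, Fin.castAdd_ne_natAdd,
      (Fin.castAdd_ne_natAdd _ _).symm]

lemma cornerBlock_eq_sandwich (x : Matrix (Fin n) (Fin n) X) :
    cornerBlock x = scalarMulRight (scalarMulLeft (blockInl n n) x) (blockInr n n)ᴴ := by
  ext i j
  refine Fin.addCases (fun i => ?_) (fun i => ?_) i <;>
    refine Fin.addCases (fun j => ?_) (fun j => ?_) j <;>
    simp [cornerBlock, scalarMulLeft, scalarMulRight, blockInl, blockInr, Fin.castAdd_ne_natAdd,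
      -Fin.natAdd_eq_addNat, (Fin.castAdd_ne_natAdd _ _).symm]

lemma sandwich_blockInl_blockDiag (x : Matrix (Fin m) (Fin m) X) (y : Matrix (Fin n) (Fin n) X) :
    scalarMulRight (scalarMulLeft (blockInl m n)ᴴ (blockDiag x y)) (blockInl m n) = x := by
  simp [blockDiag_eq_sandwich, scalarMulLeft_add_right, scalarMulRight_add_left, sandwich_sandwich]

lemma sandwich_blockInr_blockDiag (x : Matrix (Fin m) (Fin m) X) (y : Matrix (Fin n) (Fin n) X) :
    scalarMulRight (scalarMulLeft (blockInr m n)ᴴ (blockDiag x y)) (blockInr m n) = y := by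
  simp [blockDiag_eq_sandwich, scalarMulLeft_add_right, scalarMulRight_add_left, sandwich_sandwich]

lemma sandwich_blockInl_cornerBlock (x : Matrix (Fin n) (Fin n) X) :
    scalarMulRight (scalarMulLeft (blockInl n n)ᴴ (cornerBlock x)) (blockInr n n) = x := by
  simp [cornerBlock_eq_sandwich, sandwich_sandwich]

end ScalarMul
namespace OSNorm

variable {X : Type u} [AddCommGroup X] [Module ℂ X] (OS : OSNorm X)

@[simp] lemma O_zero (n : ℕ) : OS.O n 0 = 0 := (OS.eq_zero_iff n 0).mpr rfl

lemma O_pos {n : ℕ} {x : Matrix (Fin n) (Fin n) X} (hx : x ≠ 0) : 0 < OS.O n x :=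
  (OS.nonneg n x).lt_of_ne' fun h => hx ((OS.eq_zero_iff n x).mp h)

lemma O_inv_smul_self {n : ℕ} {x : Matrix (Fin n) (Fin n) X} (hx : x ≠ 0) :
    OS.O n ((OS.O n x : ℂ)⁻¹ • x) = 1 := by
  rw [OS.smul_eq, norm_inv, Complex.norm_real, Real.norm_of_nonneg (OS.O_pos hx).le,
    inv_mul_cancel₀ (OS.O_pos hx).ne']

lemma O_sandwich_le {m n : ℕ} {α : Matrix (Fin n) (Fin m) ℂ} {β : Matrix (Fin m) (Fin n) ℂ}
    (hα : ‖α‖ ≤ 1) (hβ : ‖β‖ ≤ 1) (x : Matrix (Fin m) (Fin m) X) :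
    OS.O n (scalarMulRight (scalarMulLeft α x) β) ≤ OS.O m x :=
  calc _ ≤ ‖α‖ * OS.O m x * ‖β‖ := OS.cond_OII m n α x β
    _ ≤ 1 * OS.O m x * 1 := by have := OS.nonneg m x; gcongr
    _ = OS.O m x := by ring

lemma O_cornerBlock {n : ℕ} (x : Matrix (Fin n) (Fin n) X) :
    OS.O (n + n) (cornerBlock x) = OS.O n x := by
  refine le_antisymm ?_ ?_
  · rw [cornerBlock_eq_sandwich]
    exact OS.O_sandwich_le (norm_blockInl_le n n)
      ((Matrix.l2_opNorm_conjTranspose _).trans_le (norm_blockInr_le n n)) x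
  · conv_lhs => rw [← sandwich_blockInl_cornerBlock x]
    exact OS.O_sandwich_le ((Matrix.l2_opNorm_conjTranspose _).trans_le (norm_blockInl_le n n))
      (norm_blockInr_le n n) _

end OSNorm

section Wmax

variable {X : Type u} [AddCommGroup X] [Module ℂ X] (OS : OSNorm X)

lemma matOpNorm_eq_norm {m n : ℕ} (α : Matrix (Fin m) (Fin n) ℂ) : matOpNorm α = ‖α‖ := rfl

def decompCosts (n : ℕ) (x : Matrix (Fin n) (Fin n) X) : Set ℝ :=
  {t | ∃ (r : ℕ) (a : Matrix (Fin n) (Fin r) ℂ) (y : Matrix (Fin r) (Fin r) X)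
      (b : Matrix (Fin r) (Fin n) ℂ),
    x = scalarMulRight (scalarMulLeft a y) b ∧ OS.O r y = 1 ∧
      t = (1 / 2) * ‖a * aᴴ + bᴴ * b‖}

lemma Wmax_eq_sInf (n : ℕ) (x : Matrix (Fin n) (Fin n) X) :
    Wmax OS n x = sInf (decompCosts OS n x) :=
  rfl

variable {OS}

lemma mem_decompCosts {n r : ℕ} {x : Matrix (Fin n) (Fin n) X} {a : Matrix (Fin n) (Fin r) ℂ}
    {y : Matrix (Fin r) (Fin r) X} {b : Matrix (Fin r) (Fin n) ℂ}
    (hx : x = scalarMulRight (scalarMulLeft a y) b) (hy : OS.O r y = 1) :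
    (1 / 2) * ‖a * aᴴ + bᴴ * b‖ ∈ decompCosts OS n x :=
  ⟨r, a, y, b, hx, hy, rfl⟩

lemma nonneg_of_mem_decompCosts {n : ℕ} {x : Matrix (Fin n) (Fin n) X} {t : ℝ}
    (ht : t ∈ decompCosts OS n x) : 0 ≤ t := by
  obtain ⟨r, a, y, b, -, -, rfl⟩ := ht
  exact mul_nonneg (by norm_num) (norm_nonneg _)

lemma bddBelow_decompCosts (n : ℕ) (x : Matrix (Fin n) (Fin n) X) : BddBelow (decompCosts OS n x) :=
  ⟨0, fun _ => nonneg_of_mem_decompCosts⟩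

lemma Wmax_le_of_mem {n : ℕ} {x : Matrix (Fin n) (Fin n) X} {t : ℝ}
    (ht : t ∈ decompCosts OS n x) : Wmax OS n x ≤ t :=
  csInf_le (bddBelow_decompCosts n x) ht

variable (OS)

lemma Wmax_nonneg (n : ℕ) (x : Matrix (Fin n) (Fin n) X) : 0 ≤ Wmax OS n x :=
  Real.sInf_nonneg fun _ => nonneg_of_mem_decompCosts

lemma Wmax_zero (n : ℕ) : Wmax OS n 0 = 0 := by
  rcases (decompCosts OS n 0).eq_empty_or_nonempty with h | ⟨t, r, -, y, -, -, hy, -⟩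
  · rw [Wmax_eq_sInf, h, Real.sInf_empty]
  · refine (Wmax_le_of_mem ?_).antisymm (Wmax_nonneg OS n 0)
    simpa using mem_decompCosts (a := 0) (b := 0) (by simp) hy

lemma Wmax_of_subsingleton [Subsingleton X] (n : ℕ) (x : Matrix (Fin n) (Fin n) X) :
    Wmax OS n x = 0 := by
  rw [Subsingleton.elim x 0, Wmax_zero]

lemma decompCosts_nonempty [Nontrivial X] (n : ℕ) (x : Matrix (Fin n) (Fin n) X) :
    (decompCosts OS n x).Nonempty := by
  by_cases hx : x = 0
  · obtain ⟨v, hv⟩ := exists_ne (0 : X)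
    have hz : Matrix.of (fun _ _ => v) ≠ (0 : Matrix (Fin 1) (Fin 1) X) :=
      fun h => hv (congrFun (congrFun h 0) 0)
    exact ⟨_, mem_decompCosts (a := 0) (b := 0) (by simp [hx]) (OS.O_inv_smul_self hz)⟩
  · have hc : (OS.O n x : ℂ) ≠ 0 := Complex.ofReal_ne_zero.mpr (OS.O_pos hx).ne'
    refine ⟨_, mem_decompCosts (a := (OS.O n x : ℂ) • 1) (b := 1) ?_ (OS.O_inv_smul_self hx)⟩
    rw [scalarMulLeft_smul_left, scalarMulLeft_smul_right, scalarMulLeft_one, scalarMulRight_one,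
      smul_inv_smul₀ hc]

variable {OS} in
lemma half_O_le_of_mem_decompCosts {n : ℕ} {x : Matrix (Fin n) (Fin n) X} {t : ℝ}
    (ht : t ∈ decompCosts OS n x) : (1 / 2) * OS.O n x ≤ t := by
  obtain ⟨r, a, y, b, rfl, hy, rfl⟩ := ht
  have := OS.cond_OII r n a y b
  rw [hy, mul_one, matOpNorm_eq_norm, matOpNorm_eq_norm] at this
  have := norm_mul_norm_le_norm_mul_conjTranspose_add a b
  exact mul_le_mul_of_nonneg_left (by linarith) (by norm_num)

lemma half_O_le_Wmax (n : ℕ) (x : Matrix (Fin n) (Fin n) X) : (1 / 2) * OS.O n x ≤ Wmax OS n x := by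
  rcases subsingleton_or_nontrivial X with _ | _
  · simp [Subsingleton.elim x 0, Wmax_zero]
  exact le_csInf (decompCosts_nonempty OS n x) fun _ => half_O_le_of_mem_decompCosts

lemma Wmax_eq_zero_iff (n : ℕ) (x : Matrix (Fin n) (Fin n) X) : Wmax OS n x = 0 ↔ x = 0 := by
  refine ⟨fun h => (OS.eq_zero_iff n x).mp ?_, fun h => h ▸ Wmax_zero OS n⟩
  linarith [half_O_le_Wmax OS n x, OS.nonneg n x]

variable {OS} in
lemma Wmax_le_mul_of_forall_exists {m n : ℕ} {x : Matrix (Fin m) (Fin m) X}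
    {x' : Matrix (Fin n) (Fin n) X} {k : ℝ} (hk : 0 ≤ k)
    (h : ∀ t ∈ decompCosts OS m x, ∃ t' ∈ decompCosts OS n x', t' ≤ k * t) :
    Wmax OS n x' ≤ k * Wmax OS m x := by
  rcases subsingleton_or_nontrivial X with _ | _
  · simp [Wmax_of_subsingleton]
  rw [Wmax_eq_sInf, Wmax_eq_sInf, ← smul_eq_mul, ← Real.sInf_smul_of_nonneg hk]
  refine le_csInf ((decompCosts_nonempty OS m x).smul_set) ?_
  rintro _ ⟨t, ht, rfl⟩
  obtain ⟨t', ht', hle⟩ := h t ht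
  exact (Wmax_le_of_mem ht').trans hle

lemma Wmax_smul_le (n : ℕ) (c : ℂ) (x : Matrix (Fin n) (Fin n) X) :
    Wmax OS n (c • x) ≤ ‖c‖ * Wmax OS n x := by
  refine Wmax_le_mul_of_forall_exists (norm_nonneg c) ?_
  rintro _ ⟨r, a, y, b, rfl, hy, rfl⟩
  obtain ⟨d, rfl⟩ := IsAlgClosed.exists_eq_mul_self c
  refine ⟨_, mem_decompCosts (a := d • a) (b := d • b) ?_ hy, le_of_eq ?_⟩
  · rw [scalarMulLeft_smul_left, scalarMulRight_smul_left, scalarMulRight_smul_right, smul_smul]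
  · have hd : star d * d = ((‖d‖ ^ 2 : ℝ) : ℂ) := by
      rw [mul_comm]; exact_mod_cast Complex.mul_conj' d
    rw [Matrix.conjTranspose_smul, Matrix.conjTranspose_smul, Matrix.smul_mul, Matrix.mul_smul,
      Matrix.smul_mul, Matrix.mul_smul, smul_smul, smul_smul, mul_comm d (star d), hd, ← smul_add,
      norm_smul, Complex.norm_real, norm_mul, Real.norm_of_nonneg (by positivity)]
    ring

lemma Wmax_smul (n : ℕ) (c : ℂ) (x : Matrix (Fin n) (Fin n) X) :
    Wmax OS n (c • x) = ‖c‖ * Wmax OS n x := by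
  rcases eq_or_ne c 0 with rfl | hc
  · simp [Wmax_zero]
  refine (Wmax_smul_le OS n c x).antisymm ?_
  have := Wmax_smul_le OS n c⁻¹ (c • x)
  rw [inv_smul_smul₀ hc, norm_inv] at this
  rwa [← le_inv_mul_iff₀ (norm_pos_iff.mpr hc)]

lemma Wmax_sandwich_le {n r : ℕ} (a : Matrix (Fin n) (Fin r) ℂ) (y : Matrix (Fin r) (Fin r) X)
    (b : Matrix (Fin r) (Fin n) ℂ) :
    Wmax OS n (scalarMulRight (scalarMulLeft a y) b) ≤ (1 / 2) * ‖a * aᴴ + bᴴ * b‖ * OS.O r y := by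
  by_cases hy : y = 0
  · simp [hy, Wmax_zero]
  have hc : (OS.O r y : ℂ) ≠ 0 := Complex.ofReal_ne_zero.mpr (OS.O_pos hy).ne'
  have hsplit : scalarMulRight (scalarMulLeft a y) b
      = (OS.O r y : ℂ) • scalarMulRight (scalarMulLeft a ((OS.O r y : ℂ)⁻¹ • y)) b := by
    rw [scalarMulLeft_smul_right, scalarMulRight_smul_left, smul_inv_smul₀ hc]
  rw [hsplit, Wmax_smul, Complex.norm_real, Real.norm_of_nonneg (OS.nonneg r y), mul_comm]
  exact mul_le_mul_of_nonneg_right (Wmax_le_of_mem (mem_decompCosts rfl (OS.O_inv_smul_self hy)))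
    (OS.nonneg r y)

lemma Wmax_conj_le {m n : ℕ} (α : Matrix (Fin n) (Fin m) ℂ) (x : Matrix (Fin m) (Fin m) X) :
    Wmax OS n (scalarMulRight (scalarMulLeft α x) αᴴ) ≤ ‖α‖ ^ 2 * Wmax OS m x := by
  refine Wmax_le_mul_of_forall_exists (by positivity) ?_
  rintro _ ⟨r, a, y, b, rfl, hy, rfl⟩
  refine ⟨_, mem_decompCosts (a := α * a) (b := b * αᴴ) (sandwich_sandwich _ _ _ _ _) hy, ?_⟩
  calc (1 / 2) * ‖α * a * (α * a)ᴴ + (b * αᴴ)ᴴ * (b * αᴴ)‖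
      = (1 / 2) * ‖α * ((a * aᴴ + bᴴ * b) * αᴴ)‖ := by
        simp [Matrix.conjTranspose_mul, Matrix.mul_add, Matrix.add_mul, Matrix.mul_assoc]
    _ ≤ (1 / 2) * (‖α‖ * (‖a * aᴴ + bᴴ * b‖ * ‖αᴴ‖)) := by
        gcongr
        exact (Matrix.l2_opNorm_mul _ _).trans (by gcongr; exact Matrix.l2_opNorm_mul _ _)
    _ = ‖α‖ ^ 2 * ((1 / 2) * ‖a * aᴴ + bᴴ * b‖) := by
        rw [Matrix.l2_opNorm_conjTranspose]; ring

lemma Wmax_conj_le_of_norm_le_one {m n : ℕ} {α : Matrix (Fin n) (Fin m) ℂ} (hα : ‖α‖ ≤ 1)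
    (x : Matrix (Fin m) (Fin m) X) :
    Wmax OS n (scalarMulRight (scalarMulLeft α x) αᴴ) ≤ Wmax OS m x := by
  refine (Wmax_conj_le OS α x).trans (mul_le_of_le_one_left (Wmax_nonneg OS m x) ?_)
  exact pow_le_one₀ (norm_nonneg α) hα

variable {OS} in
lemma exists_mem_decompCosts_add_le {n : ℕ} {x x' : Matrix (Fin n) (Fin n) X} {t t' : ℝ}
    (ht : t ∈ decompCosts OS n x) (ht' : t' ∈ decompCosts OS n x') :
    ∃ u ∈ decompCosts OS n (x + x'), u ≤ t + t' := by
  obtain ⟨r, a, y, b, rfl, hy, rfl⟩ := ht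
  obtain ⟨r', a', y', b', rfl, hy', rfl⟩ := ht'
  refine ⟨_, mem_decompCosts (a := a * (blockInl r r')ᴴ + a' * (blockInr r r')ᴴ)
    (y := blockDiag y y') (b := blockInl r r' * b + blockInr r r' * b') ?_ ?_, ?_⟩
  · rw [blockDiag_eq_sandwich, scalarMulLeft_add_right, scalarMulRight_add_left,
      sandwich_sandwich, sandwich_sandwich]
    simp [Matrix.add_mul, Matrix.mul_add, Matrix.mul_assoc]
  · rw [OS.cond_OI, hy, hy', max_self]
  · calc _ = (1 / 2) * ‖(a * aᴴ + bᴴ * b) + (a' * a'ᴴ + b'ᴴ * b')‖ := by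
          congr 2
          simp [Matrix.add_mul, Matrix.mul_add, Matrix.mul_assoc, Matrix.conjTranspose_add,
            Matrix.conjTranspose_mul]
          abel
      _ ≤ _ := by rw [← mul_add]; gcongr; exact norm_add_le _ _

lemma Wmax_add_le (n : ℕ) (x x' : Matrix (Fin n) (Fin n) X) :
    Wmax OS n (x + x') ≤ Wmax OS n x + Wmax OS n x' := by
  rcases subsingleton_or_nontrivial X with _ | _
  · simp [Wmax_of_subsingleton]
  rw [Wmax_eq_sInf, Wmax_eq_sInf, Wmax_eq_sInf, ← csInf_add (decompCosts_nonempty OS n x)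
    (bddBelow_decompCosts n x) (decompCosts_nonempty OS n x') (bddBelow_decompCosts n x')]
  refine le_csInf ((decompCosts_nonempty OS n x).add (decompCosts_nonempty OS n x')) ?_
  rintro _ ⟨t, ht, t', ht', rfl⟩
  obtain ⟨u, hu, hle⟩ := exists_mem_decompCosts_add_le ht ht'
  exact (Wmax_le_of_mem hu).trans hle

variable {OS} in
lemma exists_mem_decompCosts_blockDiag_le {m n : ℕ} {x : Matrix (Fin m) (Fin m) X}
    {x' : Matrix (Fin n) (Fin n) X} {t t' : ℝ}
    (ht : t ∈ decompCosts OS m x) (ht' : t' ∈ decompCosts OS n x') :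
    ∃ u ∈ decompCosts OS (m + n) (blockDiag x x'), u ≤ max t t' := by
  obtain ⟨r, a, y, b, rfl, hy, rfl⟩ := ht
  obtain ⟨r', a', y', b', rfl, hy', rfl⟩ := ht'
  refine ⟨_, mem_decompCosts
    (a := blockInl m n * a * (blockInl r r')ᴴ + blockInr m n * a' * (blockInr r r')ᴴ)
    (y := blockDiag y y')
    (b := blockInl r r' * b * (blockInl m n)ᴴ + blockInr r r' * b' * (blockInr m n)ᴴ) ?_ ?_, ?_⟩
  · rw [blockDiag_eq_sandwich, blockDiag_eq_sandwich, scalarMulLeft_add_right,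
      scalarMulRight_add_left]
    simp [sandwich_sandwich, Matrix.add_mul, Matrix.mul_add, Matrix.mul_assoc]
  · rw [OS.cond_OI, hy, hy', max_self]
  · calc _ = (1 / 2) * ‖blockInl m n * (a * aᴴ + bᴴ * b) * (blockInl m n)ᴴ
          + blockInr m n * (a' * a'ᴴ + b'ᴴ * b') * (blockInr m n)ᴴ‖ := by
          congr 2
          simp [Matrix.add_mul, Matrix.mul_add, Matrix.mul_assoc, Matrix.conjTranspose_add,
            Matrix.conjTranspose_mul]
          abel
      _ ≤ (1 / 2) * max ‖a * aᴴ + bᴴ * b‖ ‖a' * a'ᴴ + b'ᴴ * b'‖ := by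
          gcongr; exact norm_blockDiagStarHom_le m n _ _
      _ = _ := mul_max_of_nonneg _ _ (by norm_num)

lemma Wmax_blockDiag {m n : ℕ} (x : Matrix (Fin m) (Fin m) X) (y : Matrix (Fin n) (Fin n) X) :
    Wmax OS (m + n) (blockDiag x y) = max (Wmax OS m x) (Wmax OS n y) := by
  refine le_antisymm ?_ (max_le ?_ ?_)
  · rcases subsingleton_or_nontrivial X with _ | _
    · simp [Wmax_of_subsingleton]
    exact Real.sInf_le_max_sInf (decompCosts_nonempty OS m x) (decompCosts_nonempty OS n y)
      (bddBelow_decompCosts _ _) fun t ht t' ht' => exists_mem_decompCosts_blockDiag_le ht ht'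
  · have h := Wmax_conj_le_of_norm_le_one OS
      ((Matrix.l2_opNorm_conjTranspose _).trans_le (norm_blockInl_le m n)) (blockDiag x y)
    rwa [Matrix.conjTranspose_conjTranspose, sandwich_blockInl_blockDiag] at h
  · have h := Wmax_conj_le_of_norm_le_one OS
      ((Matrix.l2_opNorm_conjTranspose _).trans_le (norm_blockInr_le m n)) (blockDiag x y)
    rwa [Matrix.conjTranspose_conjTranspose, sandwich_blockInr_blockDiag] at h

lemma Wmax_cornerBlock (n : ℕ) (x : Matrix (Fin n) (Fin n) X) :
    Wmax OS (n + n) (cornerBlock x) = (1 / 2) * OS.O n x := by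
  refine le_antisymm ?_ ?_
  · calc Wmax OS (n + n) (cornerBlock x)
        ≤ (1 / 2) * ‖blockInl n n * (blockInl n n)ᴴ + (blockInr n n)ᴴᴴ * (blockInr n n)ᴴ‖
          * OS.O n x := by
          rw [cornerBlock_eq_sandwich]; exact Wmax_sandwich_le OS _ _ _
      _ ≤ (1 / 2) * 1 * OS.O n x := by
          rw [Matrix.conjTranspose_conjTranspose, blockInl_mul_conjTranspose_add]
          have := OS.nonneg n x
          gcongr
          exact Matrix.l2_opNorm_one_le
      _ = (1 / 2) * OS.O n x := by ring
  · rw [← OS.O_cornerBlock]; exact half_O_le_Wmax OS (n + n) _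

end Wmax

/-- `𝒲_max` satisfies (OW): `𝒲_max([[0,x],[0,0]]) = (1/2) 𝒪_n(x)`; consequently
`𝒲_max` is a numerical radius norm affiliated with `(X, 𝒪_n)`. -/
theorem stmt_9 {X : Type u} [AddCommGroup X] [Module ℂ X] (OS : OSNorm X) :
    (∀ (n : ℕ) (x : Matrix (Fin n) (Fin n) X),
      Wmax OS (n + n) (cornerBlock x) = (1 / 2) * OS.O n x) ∧
    ∃ WN : NRNorm X, ∀ (n : ℕ) (x : Matrix (Fin n) (Fin n) X),
      WN.W n x = Wmax OS n x :=
  ⟨Wmax_cornerBlock OS,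
    ⟨{ W := Wmax OS
       nonneg := Wmax_nonneg OS
       eq_zero_iff := Wmax_eq_zero_iff OS
       add_le := Wmax_add_le OS
       smul_eq := Wmax_smul OS
       cond_WI := fun _ _ => Wmax_blockDiag OS
       cond_WII := fun _ _ => Wmax_conj_le OS }, fun _ _ => rfl⟩⟩
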